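/- Let A be an abelian group and let D = {a ∈ A : for every positive integer n there exists b ∈ A with n·b = a} be its subgroup of infinitely divisible elements. Assume the quotient A/D is finite. Let B : A × A → ℚ/ℤ be a ℤ-bilinear pairing whose left kernel {x : B(x,y) = 0 for all y} and right kernel {y : B(x,y) = 0 for all x} both equal D. Let φ : A → A be an additive endomorphism and u : A → A an additive automorphism such that φ∘u = u∘φ, B(φ(x), y) = B(x, u(φ(y))) for all x, y ∈ A, and φ(D) = D. Then for all positive integers m and n and every y ∈ A with φ^n(y) = 0, one has B(x,y) = 0 for all x with φ^m(x) = 0 if and only if y ∈ φ^m(ker(φ^{n+m})). -/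

import Mathlib

/-!
Pass to the finite group `Ā = A ⧸ D`: `B` descends to a pairing on `Ā` with trivial left
kernel, and `f = φ ^ m` to an endomorphism `f̄` of `Ā`. Moving `φ` across the pairing (this is
where `u` commuting with `φ` enters) shows that `range f̄` annihilates `ker f̄`. Conversely,
`ker f̄` embeds into the character group of `Ā ⧸ Ann (ker f̄)`, which has at most
`|Ā ⧸ Ann (ker f̄)|` elements because `ℚ/ℤ` embeds into `ℂˣ`; together with
`|Ā| = |ker f̄| · |range f̄|` this forces `range f̄ = Ann (ker f̄)`. Finally `φ(D) = D` lets
kernels and images be lifted from `Ā` to `A`.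
-/

open QuotientAddGroup

namespace AddCircle

noncomputable def ratToReal : AddCircle (1 : ℚ) →+ AddCircle (1 : ℝ) :=
  QuotientAddGroup.map _ _ (Rat.castHom ℝ).toAddMonoidHom
    (AddSubgroup.zmultiples_le_of_mem (by simp))

lemma ratToReal_injective : Function.Injective ratToReal := by
  refine (injective_iff_map_eq_zero _).2 fun x hx => ?_
  induction x using QuotientAddGroup.induction_on with | H q => ?_
  obtain ⟨k, hk⟩ := (coe_eq_zero_iff 1).1 hx
  refine (coe_eq_zero_iff 1).2 ⟨k, ?_⟩
  simp only [zsmul_one, RingHom.toAddMonoidHom_eq_coe, AddMonoidHom.coe_coe,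
    Rat.coe_castHom] at hk ⊢
  exact_mod_cast hk

noncomputable def ratToComplexChar : AddChar (AddCircle (1 : ℚ)) ℂ :=
  (Circle.coeHom.compAddChar toCircle_addChar).compAddMonoidHom ratToReal

lemma ratToComplexChar_injective : Function.Injective ratToComplexChar :=
  Subtype.val_injective.comp ((injective_toCircle one_ne_zero).comp ratToReal_injective)

end AddCircle

section Duality

variable (H : Type*) [AddCommGroup H] [Finite H]

instance : Finite (H →+ AddCircle (1 : ℚ)) :=
  Finite.of_injective _
    (AddChar.compAddMonoidHom_injective_right _ AddCircle.ratToComplexChar_injective)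

lemma card_addMonoidHom_ratCircle_le : Nat.card (H →+ AddCircle (1 : ℚ)) ≤ Nat.card H := by
  have := Fintype.ofFinite H
  calc Nat.card (H →+ AddCircle (1 : ℚ)) ≤ Nat.card (AddChar H ℂ) :=
        Nat.card_le_card_of_injective _
          (AddChar.compAddMonoidHom_injective_right _ AddCircle.ratToComplexChar_injective)
    _ = Nat.card H := by simp [Nat.card_eq_fintype_card]

end Duality

lemma apply_iterate_eq_apply_iterate {α M : Type*} {B : α → α → M} {f g : α → α}
    (hfg : Function.Commute f g) (h : ∀ x w, B x (f w) = B (f x) (g w)) (n : ℕ) (x w : α) :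
    B x (f^[n] w) = B (f^[n] x) (g^[n] w) := by
  induction n generalizing x w with
  | zero => rfl
  | succ n ih =>
    rw [Function.iterate_succ_apply, ih, ← hfg.iterate_right n w, h,
      Function.iterate_succ_apply' f, Function.iterate_succ_apply' g]

lemma AddSubgroup.map_pow_eq {G : Type*} [AddCommGroup G] {D : AddSubgroup G}
    {f : AddMonoid.End G} (h : D.map f = D) (n : ℕ) : D.map (f ^ n) = D := by
  induction n with
  | zero => exact D.map_id
  | succ n ih =>
    calc D.map (f ^ (n + 1)) = (D.map f).map (f ^ n) := (D.map_map (f ^ n) f).symm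
      _ = D := by rw [h, ih]

namespace AddMonoidHom

variable {G H M : Type*} [AddCommGroup G] [AddCommGroup H] [AddCommGroup M]

def mk₂ (B : G → H → M) (hl : ∀ x x' y, B (x + x') y = B x y + B x' y)
    (hr : ∀ x y y', B x (y + y') = B x y + B x y') : G →+ H →+ M :=
  mk' (fun x => mk' (B x) (hr x)) fun x x' => AddMonoidHom.ext (hl x x')

section mk₂

variable {B : G → H → M} {hl : ∀ x x' y, B (x + x') y = B x y + B x' y}
  {hr : ∀ x y y', B x (y + y') = B x y + B x y'}

lemma mem_ker_mk₂ {x : G} : x ∈ (mk₂ B hl hr).ker ↔ ∀ y, B x y = 0 :=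
  DFunLike.ext_iff

lemma mem_ker_flip_mk₂ {y : H} : y ∈ (mk₂ B hl hr).flip.ker ↔ ∀ x, B x y = 0 :=
  DFunLike.ext_iff

end mk₂

def rightAnnihilator (b : G →+ H →+ M) (K : AddSubgroup G) : AddSubgroup H :=
  (b.comp K.subtype).flip.ker

lemma mem_rightAnnihilator {b : G →+ H →+ M} {K : AddSubgroup G} {w : H} :
    w ∈ b.rightAnnihilator K ↔ ∀ x ∈ K, b x w = 0 := by
  simp [rightAnnihilator, DFunLike.ext_iff]

lemma card_le_card_quotient_rightAnnihilator [Finite H] {b : G →+ H →+ AddCircle (1 : ℚ)}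
    (hb : Function.Injective b) (K : AddSubgroup G) :
    Nat.card K ≤ Nat.card (H ⧸ b.rightAnnihilator K) := by
  let ρ : K → (H ⧸ b.rightAnnihilator K →+ AddCircle (1 : ℚ)) := fun x =>
    lift _ (b x) fun w hw => mem_rightAnnihilator.1 hw x x.2
  have hρ : Function.Injective ρ := fun x x' h =>
    Subtype.ext <| hb <| AddMonoidHom.ext fun w => DFunLike.congr_fun h (w : H ⧸ _)
  exact (Nat.card_le_card_of_injective ρ hρ).trans (card_addMonoidHom_ratCircle_le _)

theorem range_eq_rightAnnihilator_ker [Finite G] {b : G →+ G →+ AddCircle (1 : ℚ)}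
    (hb : Function.Injective b) {f : G →+ G} (hf : f.range ≤ b.rightAnnihilator f.ker) :
    f.range = b.rightAnnihilator f.ker := by
  refine AddSubgroup.eq_of_le_of_card_ge hf ?_
  have hAnn := AddSubgroup.card_eq_card_quotient_mul_card_addSubgroup (b.rightAnnihilator f.ker)
  have hker := AddSubgroup.card_eq_card_quotient_mul_card_addSubgroup f.ker
  rw [Nat.card_congr (quotientKerEquivRange f).toEquiv] at hker
  have hle := card_le_card_quotient_rightAnnihilator hb f.ker
  have hpos : 0 < Nat.card f.ker := Nat.card_pos
  nlinarith

lemma range_pow_le_rightAnnihilator_comap {b : G →+ G →+ M} {f g : AddMonoid.End G}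
    (hfg : Function.Commute f g) (h : ∀ x w, b x (f w) = b (f x) (g w))
    {D : AddSubgroup G} (hD : D ≤ b.ker) (n : ℕ) :
    (f ^ n).range ≤ b.rightAnnihilator (D.comap (f ^ n)) := by
  rintro _ ⟨z, rfl⟩
  refine mem_rightAnnihilator.2 fun x hx => ?_
  change b x ((⇑f)^[n] z) = 0
  rw [apply_iterate_eq_apply_iterate hfg h]
  exact DFunLike.congr_fun (hD hx) _

def quotientLift₂ (b : G →+ G →+ M) (D : AddSubgroup G) (hl : D ≤ b.ker)
    (hr : D ≤ b.flip.ker) : G ⧸ D →+ G ⧸ D →+ M :=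
  lift D (lift D b.flip hr).flip fun d hd => by
    ext y
    simpa using DFunLike.congr_fun (hl hd) y

lemma quotientLift₂_injective {b : G →+ G →+ M} {D : AddSubgroup G} (hl : b.ker = D)
    (hr : D ≤ b.flip.ker) : Function.Injective (b.quotientLift₂ D hl.ge hr) := by
  refine (injective_iff_map_eq_zero _).2 fun x hx => ?_
  induction x using QuotientAddGroup.induction_on with | H x => ?_
  refine (eq_zero_iff x).2 (hl ▸ AddMonoidHom.ext fun y => ?_)
  exact DFunLike.congr_fun hx (y : G ⧸ D)

theorem rightAnnihilator_ker_eq_range_of_finite_quotient {D : AddSubgroup G} [Finite (G ⧸ D)]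
    {b : G →+ G →+ AddCircle (1 : ℚ)} (hl : b.ker = D) (hr : D ≤ b.flip.ker) {f : G →+ G}
    (hfD : D.map f = D) (hf : f.range ≤ b.rightAnnihilator (D.comap f)) :
    b.rightAnnihilator f.ker = f.range := by
  refine le_antisymm (fun y hy => ?_) fun y hy => ?_
  · let f' := map D D f (AddSubgroup.map_le_iff_le_comap.1 hfD.le)
    let b' := b.quotientLift₂ D hl.ge hr
    have mem_ker_f' (x : G) : (x : G ⧸ D) ∈ f'.ker ↔ x ∈ D.comap f := eq_zero_iff (f x)
    have hf' : f'.range ≤ b'.rightAnnihilator f'.ker := by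
      rintro _ ⟨z, rfl⟩
      induction z using QuotientAddGroup.induction_on with | H z => ?_
      refine mem_rightAnnihilator.2 fun x hx => ?_
      induction x using QuotientAddGroup.induction_on with | H x => ?_
      exact mem_rightAnnihilator.1 (hf ⟨z, rfl⟩) x ((mem_ker_f' x).1 hx)
    have hy' : (y : G ⧸ D) ∈ b'.rightAnnihilator f'.ker := by
      refine mem_rightAnnihilator.2 fun x hx => ?_
      induction x using QuotientAddGroup.induction_on with | H x => ?_
      obtain ⟨d, hd, hfd⟩ : f x ∈ D.map f := by rw [hfD]; exact (mem_ker_f' x).1 hx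
      have hker : x - d ∈ f.ker := by simp [hfd]
      have hbd : b d = 0 := hl.ge hd
      show b x y = 0
      simpa [hbd] using mem_rightAnnihilator.1 hy _ hker
    obtain ⟨z, hz⟩ := (range_eq_rightAnnihilator_ker (quotientLift₂_injective hl hr) hf').ge hy'
    induction z using QuotientAddGroup.induction_on with | H z => ?_
    obtain ⟨d, hd, hfd⟩ : -f z + y ∈ D.map f := by
      rw [hfD]; exact QuotientAddGroup.eq.1 (hz : ((f z : G) : G ⧸ D) = y)
    exact ⟨z + d, by simp [hfd]⟩
  · exact mem_rightAnnihilator.2 fun x hx =>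
      mem_rightAnnihilator.1 (hf hy) x (f.ker_le_comap D hx)

end AddMonoidHom

theorem stmt_5_general {A : Type*} [AddCommGroup A] (D : AddSubgroup A)
    (hfin : Finite (A ⧸ D))
    (B : A → A → AddCircle (1 : ℚ))
    (hBl : ∀ x x' y : A, B (x + x') y = B x y + B x' y)
    (hBr : ∀ x y y' : A, B x (y + y') = B x y + B x y')
    (hlk : {x : A | ∀ y : A, B x y = 0} = (D : Set A))
    (hrk : {y : A | ∀ x : A, B x y = 0} = (D : Set A))
    (φ : AddMonoid.End A) (u : A ≃+ A)
    (hcomm : ∀ x : A, φ (u x) = u (φ x))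
    (hadj : ∀ x y : A, B (φ x) y = B x (u (φ y)))
    (hφD : ⇑φ '' (D : Set A) = (D : Set A))
    (m n : ℕ) (y : A) (hy : (φ ^ n) y = 0) :
    (∀ x : A, (φ ^ m) x = 0 → B x y = 0) ↔
      ∃ z : A, (φ ^ (n + m)) z = 0 ∧ (φ ^ m) z = y := by
  have := hfin
  let b := AddMonoidHom.mk₂ B hBl hBr
  have hl : b.ker = D :=
    AddSubgroup.ext fun x => AddMonoidHom.mem_ker_mk₂.trans (Set.ext_iff.1 hlk x)
  have hr : D ≤ b.flip.ker := fun d hd =>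
    AddMonoidHom.mem_ker_flip_mk₂.2 ((Set.ext_iff.1 hrk d).2 hd)
  have hφu : Function.Commute φ u.symm := fun x =>
    u.injective (by rw [← hcomm, u.apply_symm_apply, u.apply_symm_apply])
  have hmove (x w : A) : b x (φ w) = b (φ x) (u.symm w) := by
    change B x (φ w) = B (φ x) (u.symm w)
    rw [hadj, ← hcomm, u.apply_symm_apply]
  have hrange := AddMonoidHom.range_pow_le_rightAnnihilator_comap (g := u.symm.toAddMonoidHom)
    hφu hmove hl.ge m
  have hφmD := AddSubgroup.map_pow_eq (SetLike.coe_injective hφD : D.map φ = D) m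
  calc (∀ x : A, (φ ^ m) x = 0 → B x y = 0) ↔ y ∈ b.rightAnnihilator (φ ^ m).ker := by
        rw [AddMonoidHom.mem_rightAnnihilator]; rfl
    _ ↔ y ∈ (φ ^ m).range := by
        rw [AddMonoidHom.rightAnnihilator_ker_eq_range_of_finite_quotient hl hr hφmD hrange]
    _ ↔ ∃ z : A, (φ ^ (n + m)) z = 0 ∧ (φ ^ m) z = y := by
        refine ⟨fun ⟨z, hz⟩ => ⟨z, ?_, hz⟩, fun ⟨z, _, hz⟩ => ⟨z, hz⟩⟩
        change (⇑φ)^[n + m] z = 0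
        rw [Function.iterate_add_apply, show (⇑φ)^[m] z = y from hz]
        exact hy

/-- Generic content of Proposition 5.1: perfection of the induced pairing. Here `D` is
the subgroup of infinitely divisible elements of `A`, the quotient `A ⧸ D` is finite,
`B` is a bilinear pairing into `ℚ/ℤ` with left and right kernels equal to `D`, and
`φ` is an endomorphism with a commuting automorphism `u` satisfying the adjunction
`B (φ x) y = B x (u (φ y))` and `φ(D) = D`. Then for `y ∈ ker (φ^n)`, `y` annihilates
`ker (φ^m)` iff `y ∈ φ^m (ker (φ^(n+m)))`. -/
theorem stmt_5 {A : Type*} [AddCommGroup A] (D : AddSubgroup A)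
    (hD : (D : Set A) = {a : A | ∀ n : ℕ, 0 < n → ∃ b : A, n • b = a})
    (hfin : Finite (A ⧸ D))
    (B : A → A → AddCircle (1 : ℚ))
    (hBl : ∀ x x' y : A, B (x + x') y = B x y + B x' y)
    (hBr : ∀ x y y' : A, B x (y + y') = B x y + B x y')
    (hlk : {x : A | ∀ y : A, B x y = 0} = (D : Set A))
    (hrk : {y : A | ∀ x : A, B x y = 0} = (D : Set A))
    (φ : AddMonoid.End A) (u : A ≃+ A)
    (hcomm : ∀ x : A, φ (u x) = u (φ x))
    (hadj : ∀ x y : A, B (φ x) y = B x (u (φ y)))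
    (hφD : ⇑φ '' (D : Set A) = (D : Set A))
    (m n : ℕ) (hm : 0 < m) (hn : 0 < n) (y : A) (hy : (φ ^ n) y = 0) :
    (∀ x : A, (φ ^ m) x = 0 → B x y = 0) ↔
      ∃ z : A, (φ ^ (n + m)) z = 0 ∧ (φ ^ m) z = y :=
  stmt_5_general D hfin B hBl hBr hlk hrk φ u hcomm hadj hφD m n y hy
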